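/- arXiv:0902.4763 — 7 statements merged into one kernel-verified Lean document; each statement's English description precedes it below -/
import Mathlib

section
/- Let n be a homogeneous polynomial law of degree d from B to A. Then for every k ≥ 1, the map Θ_k is A-linear in each of its arguments: for all a, a' ∈ A, all b, b' ∈ B, all indices 1 ≤ i ≤ k and all b_1, …, b_k ∈ B, Θ_k(b_1, …, a·b + a'·b', …, b_k) = a·Θ_k(b_1, …, b, …, b_k) + a'·Θ_k(b_1, …, b', …, b_k), where the displayed element occupies the i-th slot. -/
/-!
Apply `n` to the universal element `1 ⊗ 1 + ∑ⱼ tⱼ ⊗ b'ⱼ + s ⊗ x'` over `A[t₁, …, t_k, s]`, where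
`b' = b` with `x` in slot `i`, and specialise along `tᵢ ↦ c₀ tᵢ`, `s ↦ c₁ tᵢ`. The image is the
element defining `Θ_k` at `b` with `c₀ x + c₁ x'` in slot `i`, and the only monomials sent to
`t₁ ⋯ t_k` are `t₁ ⋯ t_k` and `t₁ ⋯ t̂ᵢ ⋯ t_k s`, with factors `c₀` and `c₁`. By naturality,
`Θ_k(…, c₀ x + c₁ x', …)` is therefore an `A`-linear combination, with coefficients `c₀, c₁`,
of two fixed elements of `A`; the cases `(c₀, c₁) = (1, 0), (0, 1)` identify them as
`Θ_k(…, x, …)` and `Θ_k(…, x', …)`.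
-/

open scoped TensorProduct

universe u

abbrev RawLaw (A B : Type u) [CommRing A] [CommRing B] [Algebra A B] : Type (u + 1) :=
  ∀ (A' : Type u) [CommRing A'] [Algebra A A'], A' ⊗[A] B → A'

variable {A B : Type u} [CommRing A] [CommRing B] [Algebra A B]

/-- Naturality of a family of maps `A' ⊗[A] B → A'`. -/
def IsNatural (n : RawLaw A B) : Prop :=
  ∀ (A' : Type u) [CommRing A'] [Algebra A A']
    (A'' : Type u) [CommRing A''] [Algebra A A'']
    (φ : A' →ₐ[A] A'') (x : A' ⊗[A] B),
    φ (n A' x) = n A'' (LinearMap.rTensor B φ.toLinearMap x)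

/-- Homogeneity of degree `d`. -/
def IsHomog (d : ℕ) (n : RawLaw A B) : Prop :=
  ∀ (A' : Type u) [CommRing A'] [Algebra A A'] (a : A') (x : A' ⊗[A] B),
    n A' (a • x) = a ^ d * n A' x

/-- Multiplicativity. -/
def IsMult (n : RawLaw A B) : Prop :=
  ∀ (A' : Type u) [CommRing A'] [Algebra A A'],
    n A' (1 : A' ⊗[A] B) = 1 ∧ ∀ x y : A' ⊗[A] B, n A' (x * y) = n A' x * n A' y

/-- `Θ_k(b_1, …, b_k)`: the coefficient of `t_1 ⋯ t_k` in
`n_{A[t_1,…,t_k]}(1 ⊗ 1 + ∑ t_i ⊗ b_i)`. -/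
noncomputable def Theta (n : RawLaw A B) (k : ℕ) (b : Fin k → B) : A :=
  MvPolynomial.coeff (Finsupp.equivFunOnFinite.symm fun _ => 1)
    (n (MvPolynomial (Fin k) A)
      ((1 : MvPolynomial (Fin k) A ⊗[A] B) + ∑ i, MvPolynomial.X i ⊗ₜ[A] b i))

open MvPolynomial Function Finset

section Monomials

variable {σ τ : Type*}

theorem aeval_C_mul_X_monomial (γ : σ → A) (ψ : σ → τ) (m : σ →₀ ℕ) (c : A) :
    aeval (fun s => C (γ s) * X (ψ s)) (monomial m c : MvPolynomial σ A)
      = monomial (m.mapDomain ψ) (c * m.prod fun s e => γ s ^ e) := by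
  have hX : (m.prod fun s e => (X (ψ s) : MvPolynomial τ A) ^ e)
      = monomial (m.mapDomain ψ) 1 := by
    rw [← rename_monomial, rename_eq_aeval, aeval_monomial, map_one, one_mul]; rfl
  have hC : (m.prod fun s e => (C (γ s) : MvPolynomial τ A) ^ e)
      = C (m.prod fun s e => γ s ^ e) := by
    simp only [map_finsuppProd, map_pow]
  rw [aeval_monomial]
  simp_rw [mul_pow]
  rw [Finsupp.prod_mul, hC, hX, algebraMap_eq, ← mul_assoc, ← map_mul, C_mul_monomial, mul_one]

theorem mapDomain_getD (i : τ) (m : Option τ →₀ ℕ) :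
    m.mapDomain (·.getD i) = Finsupp.single i (m none) + m.some := by
  rw [Finsupp.mapDomain, Finsupp.sum_option_index _ _ (fun _ => Finsupp.single_zero _)
    (fun _ _ _ => Finsupp.single_add _ _ _)]
  simp [Finsupp.sum_single]

end Monomials

section Merge

variable {ι : Type*} [Fintype ι] [DecidableEq ι]

noncomputable def onesExcept {σ : Type*} [Finite σ] [DecidableEq σ] (v : σ) : σ →₀ ℕ :=
  Finsupp.equivFunOnFinite.symm fun w => if w = v then 0 else 1

@[simp] theorem onesExcept_apply {σ : Type*} [Finite σ] [DecidableEq σ] (v w : σ) :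
    onesExcept v w = if w = v then 0 else 1 := rfl

theorem eq_onesExcept_iff {σ : Type*} [Finite σ] [DecidableEq σ] {v : σ} {m : σ →₀ ℕ} :
    m = onesExcept v ↔ m v = 0 ∧ ∀ w ≠ v, m w = 1 := by
  refine ⟨by rintro rfl; simp_all, fun ⟨hv, hw⟩ => Finsupp.ext fun w => ?_⟩
  by_cases h : w = v
  · simp [h, hv]
  · simp [h, hw w h]

theorem mapDomain_getD_eq_ones_iff (i : ι) (m : Option ι →₀ ℕ) :
    m.mapDomain (·.getD i) = Finsupp.equivFunOnFinite.symm (fun _ => 1)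
      ↔ m = onesExcept none ∨ m = onesExcept (some i) := by
  rw [mapDomain_getD, Finsupp.ext_iff]
  simp only [Finsupp.add_apply, Finsupp.single_apply, Finsupp.some_apply,
    Finsupp.coe_equivFunOnFinite_symm]
  constructor
  · intro h
    have hi : m none + m (some i) = 1 := by simpa using h i
    have hj : ∀ j ≠ i, m (some j) = 1 := fun j hj => by simpa [Ne.symm hj] using h j
    rcases (by omega : m none = 0 ∧ m (some i) = 1 ∨ m none = 1 ∧ m (some i) = 0)
      with ⟨h₀, h₁⟩ | ⟨h₀, h₁⟩
    · refine .inl (eq_onesExcept_iff.mpr ⟨h₀, ?_⟩)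
      rintro (_ | j) hne
      · exact absurd rfl hne
      · by_cases hji : j = i
        · rwa [hji]
        · exact hj j hji
    · refine .inr (eq_onesExcept_iff.mpr ⟨h₁, ?_⟩)
      rintro (_ | j) hne
      · exact h₀
      · exact hj j fun hji => hne (congrArg some hji)
  · rintro (rfl | rfl) j <;> by_cases hji : i = j <;> simp [hji, eq_comm]

noncomputable def mergeWeight (i : ι) (c₀ c₁ : A) (o : Option ι) : A :=
  o.elim c₁ fun j => if j = i then c₀ else 1

-- `some j ↦ tⱼ` for `j ≠ i`, `some i ↦ c₀ tᵢ`, `none ↦ c₁ tᵢ`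
noncomputable def mergeSubst (i : ι) (c₀ c₁ : A) : Option ι → MvPolynomial ι A :=
  fun o => C (mergeWeight i c₀ c₁ o) * X (o.getD i)

theorem prod_mergeWeight_onesExcept_none (i : ι) (c₀ c₁ : A) :
    ((onesExcept none).prod fun o e => mergeWeight i c₀ c₁ o ^ e) = c₀ := by
  rw [Finsupp.prod_fintype _ _ (fun _ => pow_zero _), Fintype.prod_option]
  simp [mergeWeight]

theorem prod_mergeWeight_onesExcept_some (i : ι) (c₀ c₁ : A) :
    ((onesExcept (some i)).prod fun o e => mergeWeight i c₀ c₁ o ^ e) = c₁ := by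
  rw [Finsupp.prod_fintype _ _ (fun _ => pow_zero _), Fintype.prod_option,
    Finset.prod_eq_one fun j _ => ?_]
  · simp [mergeWeight]
  · by_cases hj : j = i <;> simp [mergeWeight, hj]

theorem onesExcept_none_ne_some (i : ι) : onesExcept (none : Option ι) ≠ onesExcept (some i) :=
  fun h => by simpa using DFunLike.congr_fun h none

theorem coeff_ones_aeval_mergeSubst (i : ι) (c₀ c₁ : A) (P : MvPolynomial (Option ι) A) :
    coeff (Finsupp.equivFunOnFinite.symm fun _ => 1) (aeval (mergeSubst i c₀ c₁) P)
      = c₀ * coeff (onesExcept none) P + c₁ * coeff (onesExcept (some i)) P := by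
  induction P using MvPolynomial.induction_on' with
  | add p q hp hq => simp only [map_add, coeff_add, hp, hq]; ring
  | monomial m c =>
    unfold mergeSubst
    rw [aeval_C_mul_X_monomial, coeff_monomial, coeff_monomial, coeff_monomial]
    by_cases h : m.mapDomain (·.getD i) = Finsupp.equivFunOnFinite.symm fun _ => 1
    · rcases (mapDomain_getD_eq_ones_iff i m).mp h with rfl | rfl
      · rw [prod_mergeWeight_onesExcept_none, if_pos h, if_pos rfl,
          if_neg (onesExcept_none_ne_some i)]
        ring
      · rw [prod_mergeWeight_onesExcept_some, if_pos h, if_pos rfl,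
          if_neg (onesExcept_none_ne_some i).symm]
        ring
    · obtain ⟨h₀, h₁⟩ := not_or.mp (mt (mapDomain_getD_eq_ones_iff i m).mpr h)
      rw [if_neg h, if_neg h₀, if_neg h₁]
      ring

end Merge

section GenericElement

variable (A) in
noncomputable def genericElement {σ : Type*} [Fintype σ] (b : σ → B) : MvPolynomial σ A ⊗[A] B :=
  1 + ∑ s, X s ⊗ₜ[A] b s

theorem rTensor_aeval_genericElement {σ R : Type*} [Fintype σ] [CommRing R] [Algebra A R]
    (f : σ → R) (b : σ → B) :
    LinearMap.rTensor B (aeval f).toLinearMap (genericElement A b) = 1 + ∑ s, f s ⊗ₜ[A] b s := by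
  simp [genericElement, Algebra.TensorProduct.one_def]

theorem rTensor_mergeSubst_genericElement {ι : Type*} [Fintype ι] [DecidableEq ι] (i : ι)
    (c₀ c₁ : A) (x x' : B) (b : ι → B) :
    LinearMap.rTensor B (aeval (mergeSubst i c₀ c₁)).toLinearMap
        (genericElement A fun o => o.elim x' (update b i x))
      = genericElement A (update b i (c₀ • x + c₁ • x')) := by
  have hsome (j : ι) : mergeSubst i c₀ c₁ (some j) = update X i (c₀ • X i) j := by
    by_cases hj : j = i
    · simp [hj, mergeSubst, mergeWeight, smul_eq_C_mul]
    · simp [hj, mergeSubst, mergeWeight]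
  have hnone : mergeSubst i c₀ c₁ none = c₁ • X i := by
    simp [mergeSubst, mergeWeight, smul_eq_C_mul]
  have hsum (p : MvPolynomial ι A) (y : B) :
      ∑ j, update X i p j ⊗ₜ[A] update b i y j = p ⊗ₜ y + ∑ j ∈ univ \ {i}, X j ⊗ₜ[A] b j := by
    simp_rw [apply_update₂ (fun _ => TensorProduct.tmul A)]
    exact Finset.sum_update_of_mem (Finset.mem_univ i) _ _
  rw [rTensor_aeval_genericElement, genericElement, Fintype.sum_option, hnone]
  simp only [Option.elim, hsome]
  have hsumX := hsum (X i) (c₀ • x + c₁ • x')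
  rw [update_eq_self] at hsumX
  rw [hsum, hsumX, TensorProduct.tmul_add, TensorProduct.tmul_smul, TensorProduct.tmul_smul,
    TensorProduct.smul_tmul', TensorProduct.smul_tmul']
  abel

end GenericElement

theorem Theta_update_smul_add_smul {n : RawLaw A B} (hnat : IsNatural n) {k : ℕ} (i : Fin k)
    (c₀ c₁ : A) (x x' : B) (b : Fin k → B) :
    Theta n k (update b i (c₀ • x + c₁ • x'))
      = c₀ * coeff (onesExcept none)
          (n _ (genericElement A fun o => o.elim x' (update b i x)))
        + c₁ * coeff (onesExcept (some i))
          (n _ (genericElement A fun o => o.elim x' (update b i x))) := by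
  change coeff _ (n _ (genericElement A _)) = _
  rw [← rTensor_mergeSubst_genericElement, ← hnat, coeff_ones_aeval_mergeSubst]

theorem statement3_general {A B : Type u} [CommRing A] [CommRing B] [Algebra A B]
    (n : RawLaw A B) (hnat : IsNatural n)
    (k : ℕ) (i : Fin k) (a a' : A) (x x' : B) (b : Fin k → B) :
    Theta n k (Function.update b i (a • x + a' • x'))
      = a * Theta n k (Function.update b i x) + a' * Theta n k (Function.update b i x') := by
  have hx : update b i x = update b i ((1 : A) • x + (0 : A) • x') := by simp
  have hx' : update b i x' = update b i ((0 : A) • x + (1 : A) • x') := by simp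
  rw [hx, hx']
  simp only [Theta_update_smul_add_smul hnat]
  ring

/-- If `n` is a homogeneous polynomial law of degree `d`, then for every
`k ≥ 1` the map `Θ_k` is `A`-linear in each of its arguments. -/
theorem statement3 {A B : Type u} [CommRing A] [CommRing B] [Algebra A B]
    (d : ℕ) (hd : 0 < d) (n : RawLaw A B) (hnat : IsNatural n) (hhom : IsHomog d n)
    (k : ℕ) (hk : 1 ≤ k) (i : Fin k) (a a' : A) (x x' : B) (b : Fin k → B) :
    Theta n k (Function.update b i (a • x + a' • x'))
      = a * Theta n k (Function.update b i x) + a' * Theta n k (Function.update b i x') :=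
  statement3_general n hnat k i a a' x x' b
end

section
/- Let n be a homogeneous polynomial law of degree d from B to A which is moreover multiplicative. Then for every k ≥ 1 and all b_1, …, b_{k+1} ∈ B, the following recursion holds: Θ_{k+1}(b_1, …, b_{k+1}) = θ(b_1)·Θ_k(b_2, …, b_{k+1}) − Θ_k(b_1·b_2, b_3, …, b_{k+1}) − Θ_k(b_2, b_1·b_3, …, b_{k+1}) − ⋯ − Θ_k(b_2, b_3, …, b_1·b_{k+1}). -/
open scoped TensorProduct

universe u

variable {A B : Type u} [CommRing A] [CommRing B] [Algebra A B]

/-!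
Write `t_0, …, t_k` for the variables and `b_0, …, b_k` for the entries of `b`. By
multiplicativity, `θ(b_0) Θ_k(b_1, …, b_k)` is the coefficient of `t_0 ⋯ t_k` in
`n((1 + t_0 ⊗ b_0)(1 + ∑_{i ≥ 1} t_i ⊗ b_i)) = n(1 + ∑_i t_i ⊗ b_i + ∑_{j ≥ 1} t_0 t_j ⊗ b_0 b_j)`.
Giving each of these `2k + 1` monomials its own variable, naturality turns this coefficient into a
sum of coefficients of one universal polynomial, one for each way of building `t_0 ⋯ t_k` out of
the monomials `t_i` and `t_0 t_j`: from `t_0, …, t_k` alone, which is `Θ_{k+1}(b_0, …, b_k)`, or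
with exactly one `t_0 t_j`, which is `Θ_k(b_1, …, b_0 b_j, …, b_k)`. These two identifications are
naturality again, for substitutions that kill the unused variables.
-/

open MvPolynomial

theorem MvPolynomial.sum_killCompl_X_tmul {R M σ τ : Type*} [CommSemiring R] [AddCommMonoid M]
    [Module R M] [Fintype σ] [Fintype τ] {f : σ → τ} (hf : Function.Injective f) (w : τ → M) :
    ∑ t, (killCompl hf (X t) : MvPolynomial σ R) ⊗ₜ[R] w t = ∑ s, X s ⊗ₜ[R] w (f s) := by
  symm
  refine Finset.sum_of_injOn f hf.injOn (fun _ _ => Finset.mem_coe.2 (Finset.mem_univ _)) ?_ ?_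
  · intro t _ ht
    simp [killCompl, by simpa using ht]
  · intro s _
    rw [← rename_X f, killCompl_rename_app]

theorem MvPolynomial.aeval_monomial_one_monomial {R σ τ : Type*} [CommSemiring R]
    (f : σ → τ →₀ ℕ) (m : σ →₀ ℕ) (c : R) :
    aeval (fun s => (monomial (f s) 1 : MvPolynomial τ R)) (monomial m c)
      = monomial (Finsupp.linearCombination ℕ f m) c := by
  simp only [aeval_monomial, monomial_pow, one_pow, algebraMap_eq, monomial_finsupp_sum_index,
    Finsupp.linearCombination_apply]

theorem MvPolynomial.coeff_aeval_monomial_one {R σ τ : Type*} [CommSemiring R]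
    (f : σ → τ →₀ ℕ) (μ : τ →₀ ℕ) (M : Finset (σ →₀ ℕ))
    (hM : ∀ m, Finsupp.linearCombination ℕ f m = μ ↔ m ∈ M) (p : MvPolynomial σ R) :
    coeff μ (aeval (fun s => (monomial (f s) 1 : MvPolynomial τ R)) p) = ∑ m ∈ M, coeff m p := by
  classical
  induction p using MvPolynomial.induction_on' with
  | monomial m c =>
    simp only [aeval_monomial_one_monomial, coeff_monomial, Finset.sum_ite_eq, hM]
  | add p q hp hq => simp only [map_add, coeff_add, hp, hq, Finset.sum_add_distrib]

theorem MvPolynomial.coeff_mapDomain_add_mapDomain_rename_mul_rename {R σ τ υ : Type*}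
    [CommSemiring R] {g : σ → υ} {h : τ → υ} (hg : Function.Injective g)
    (hh : Function.Injective h) (hgh : ∀ s t, g s ≠ h t) (p : MvPolynomial σ R)
    (q : MvPolynomial τ R) (μ : σ →₀ ℕ) (ν : τ →₀ ℕ) :
    coeff (μ.mapDomain g + ν.mapDomain h) (rename g p * rename h q) = coeff μ p * coeff ν q := by
  classical
  have hsplit : ∀ (μ' : σ →₀ ℕ) (ν' : τ →₀ ℕ),
      μ'.mapDomain g + ν'.mapDomain h = (μ'.sumElim ν').mapDomain (Sum.elim g h) := by
    intro μ' ν'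
    rw [Finsupp.sumElim_eq_add, Finsupp.mapDomain_add, ← Finsupp.mapDomain_comp,
      ← Finsupp.mapDomain_comp]
    rfl
  have hunique : ∀ μ' ν', μ'.mapDomain g + ν'.mapDomain h = μ.mapDomain g + ν.mapDomain h →
      μ' = μ ∧ ν' = ν := by
    intro μ' ν' H
    rw [hsplit, hsplit] at H
    have H' := Finsupp.mapDomain_injective (hg.sumElim hh hgh) H
    exact ⟨by simpa using congr(Finsupp.comapDomain Sum.inl $H' Sum.inl_injective.injOn),
      by simpa using congr(Finsupp.comapDomain Sum.inr $H' Sum.inr_injective.injOn)⟩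
  rw [coeff_mul, Finset.sum_eq_single (μ.mapDomain g, ν.mapDomain h)]
  · rw [coeff_rename_mapDomain g hg, coeff_rename_mapDomain h hh]
  · rintro ⟨x, y⟩ hxy hne
    by_contra hprod
    obtain ⟨μ', rfl, -⟩ := coeff_rename_ne_zero g p x (left_ne_zero_of_mul hprod)
    obtain ⟨ν', rfl, -⟩ := coeff_rename_ne_zero h q y (right_ne_zero_of_mul hprod)
    obtain ⟨rfl, rfl⟩ := hunique μ' ν' (Finset.HasAntidiagonal.mem_antidiagonal.mp hxy)
    exact hne rfl
  · simp

noncomputable abbrev allOnes (ι : Type*) [Fintype ι] : ι →₀ ℕ :=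
  Finsupp.equivFunOnFinite.symm fun _ => 1

theorem mapDomain_allOnes_apply {σ τ : Type*} [Fintype τ] {ι : τ → σ}
    (hι : Function.Injective ι) (s : σ) [Decidable (s ∈ Set.range ι)] :
    (allOnes τ).mapDomain ι s = if s ∈ Set.range ι then 1 else 0 := by
  split_ifs with hs
  · obtain ⟨t, rfl⟩ := hs
    simp [Finsupp.mapDomain_apply hι]
  · exact Finsupp.mapDomain_of_notMem_range _ _ hs

theorem Nat.exists_eq_pi_single_of_sum_eq_one {ι : Type*} [Fintype ι] [DecidableEq ι]
    (x : ι → ℕ) (h : ∑ i, x i = 1) : ∃ i, x = Pi.single i 1 := by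
  obtain ⟨i, hi⟩ := (Finsupp.sum_eq_one_iff (Finsupp.equivFunOnFinite.symm x)).mp
    (by rwa [Finsupp.sum_fintype _ _ fun _ => rfl])
  exact ⟨i, by rw [← Finsupp.single_eq_pi_single, ← hi]; rfl⟩

noncomputable def lawPolynomial (n : RawLaw A B) {σ : Type} [Fintype σ] (w : σ → B) :
    MvPolynomial σ A :=
  n (MvPolynomial σ A) (1 + ∑ s, X s ⊗ₜ[A] w s)

theorem Theta_eq_coeff_lawPolynomial (n : RawLaw A B) (k : ℕ) (b : Fin k → B) :
    Theta n k b = coeff (allOnes (Fin k)) (lawPolynomial n b) := rfl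

namespace IsNatural

variable {n : RawLaw A B}

theorem map_lawPolynomial (hnat : IsNatural n) {σ : Type} [Fintype σ] {C : Type u} [CommRing C]
    [Algebra A C] (φ : MvPolynomial σ A →ₐ[A] C) (w : σ → B) :
    φ (lawPolynomial n w) = n C (1 + ∑ s, φ (X s) ⊗ₜ[A] w s) := by
  rw [lawPolynomial, hnat, map_add, map_sum]
  simp [Algebra.TensorProduct.one_def, LinearMap.rTensor_tmul]

theorem coeff_lawPolynomial_comp (hnat : IsNatural n) {σ τ : Type} [Fintype σ] [Fintype τ]
    {ι : τ → σ} (hι : Function.Injective ι) (w : σ → B) (μ : τ →₀ ℕ) :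
    coeff μ (lawPolynomial n (w ∘ ι)) = coeff (μ.mapDomain ι) (lawPolynomial n w) := by
  rw [← coeff_killCompl hι, hnat.map_lawPolynomial, sum_killCompl_X_tmul]
  rfl

theorem coeff_lawPolynomial_subst (hnat : IsNatural n) {σ τ : Type} [Fintype σ] [Fintype τ]
    (f : σ → τ →₀ ℕ) (μ : τ →₀ ℕ) (M : Finset (σ →₀ ℕ))
    (hM : ∀ m, Finsupp.linearCombination ℕ f m = μ ↔ m ∈ M) (w : σ → B) :
    coeff μ (n (MvPolynomial τ A) (1 + ∑ s, monomial (f s) 1 ⊗ₜ[A] w s))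
      = ∑ m ∈ M, coeff m (lawPolynomial n w) := by
  rw [← coeff_aeval_monomial_one f μ M hM, hnat.map_lawPolynomial]
  simp only [aeval_X]

end IsNatural

/- The universal polynomial has its variables indexed by `Option (Fin k) ⊕ Fin k`: `inl none`,
`inl (some j)` and `inr i` stand for the monomials `t_0`, `t_0 t_{j+1}` and `t_{i+1}`
(`productExponent`), with weights `b_0`, `b_0 b_{j+1}` and `b_{i+1}` (`recursionWeight`).
`productFiber o` is the exponent of the universal monomial that builds `t_0 ⋯ t_k` using `t_0`
(`o = none`) or `t_0 t_{j+1}` (`o = some j`). -/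
section Recursion

variable (k : ℕ)

open Finsupp in
noncomputable def productExponent : Option (Fin k) ⊕ Fin k → Fin (k + 1) →₀ ℕ :=
  Sum.elim (fun o => single 0 1 + o.elim 0 fun j => single j.succ 1) fun i => single i.succ 1

noncomputable def productFiber (o : Option (Fin k)) : Option (Fin k) ⊕ Fin k →₀ ℕ :=
  Finsupp.equivFunOnFinite.symm (Sum.elim (Pi.single o 1) fun i => if o = some i then 0 else 1)

theorem productFiber_injective : Function.Injective (productFiber k) := by
  intro o o' h
  simpa [productFiber, Pi.single_apply, eq_comm] using congr($h (Sum.inl o'))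

theorem linearCombination_productExponent_eq_allOnes_iff (m : Option (Fin k) ⊕ Fin k →₀ ℕ) :
    Finsupp.linearCombination ℕ (productExponent k) m = allOnes (Fin (k + 1))
      ↔ ∃ o, productFiber k o = m := by
  have hval : ∀ t, Finsupp.linearCombination ℕ (productExponent k) m t
      = ∑ s, m s * productExponent k s t := by
    intro t
    rw [Finsupp.linearCombination_apply, Finsupp.sum_fintype _ _ (by simp), Finsupp.finsetSum_apply]
    simp
  have hval0 : ∑ s, m s * productExponent k s 0 = ∑ o, m (Sum.inl o) := by
    simp [productExponent, Fintype.sum_sum_type, Fin.succ_ne_zero]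
  have hvalSucc : ∀ i,
      ∑ s, m s * productExponent k s i.succ = m (Sum.inl (some i)) + m (Sum.inr i) := by
    simp [productExponent, Fintype.sum_sum_type, Finsupp.single_apply, Fin.succ_ne_zero]
  rw [Finsupp.ext_iff, Fin.forall_fin_succ]
  simp only [hval, hval0, hvalSucc, allOnes, Finsupp.coe_equivFunOnFinite_symm]
  constructor
  · rintro ⟨hsum, hpair⟩
    obtain ⟨o, ho⟩ := Nat.exists_eq_pi_single_of_sum_eq_one _ hsum
    refine ⟨o, Finsupp.ext ?_⟩
    rintro (o' | i)
    · simpa [productFiber] using (congr_fun ho o').symm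
    · have := hpair i
      rw [congr_fun ho] at this
      by_cases h : o = some i <;> simp_all [productFiber]
  · rintro ⟨o, rfl⟩
    refine ⟨by simp [productFiber], fun i => ?_⟩
    by_cases h : o = some i <;> simp [productFiber, h]

variable {k}

noncomputable def recursionWeight (b : Fin (k + 1) → B) : Option (Fin k) ⊕ Fin k → B :=
  Sum.elim (fun o => o.elim (b 0) fun j => b 0 * b j.succ) fun i => b i.succ

theorem Theta_succ_eq_coeff_productFiber_none {n : RawLaw A B} (hnat : IsNatural n)
    (b : Fin (k + 1) → B) :
    Theta n (k + 1) b = coeff (productFiber k none) (lawPolynomial n (recursionWeight b)) := by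
  let ι : Fin (k + 1) → Option (Fin k) ⊕ Fin k := Fin.cases (Sum.inl none) Sum.inr
  have hι : Function.Injective ι := by
    intro i i'
    cases i using Fin.cases <;> cases i' using Fin.cases <;> simp [ι]
  have hb : recursionWeight b ∘ ι = b := by
    funext i
    cases i using Fin.cases <;> simp [ι, recursionWeight]
  rw [Theta_eq_coeff_lawPolynomial, ← hb, hnat.coeff_lawPolynomial_comp hι]
  congr 1
  ext s
  rw [mapDomain_allOnes_apply hι]
  rcases s with (_ | j) | i <;> simp [ι, productFiber, Fin.exists_fin_succ]

theorem Theta_update_eq_coeff_productFiber_some {n : RawLaw A B} (hnat : IsNatural n)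
    (b : Fin (k + 1) → B) (j : Fin k) :
    Theta n k (Function.update (fun i => b i.succ) j (b 0 * b j.succ))
      = coeff (productFiber k (some j)) (lawPolynomial n (recursionWeight b)) := by
  let ι : Fin k → Option (Fin k) ⊕ Fin k := fun i => if i = j then Sum.inl (some j) else Sum.inr i
  have hι : Function.Injective ι := by
    intro i i'
    by_cases hi : i = j <;> by_cases hi' : i' = j <;> simp [ι, hi, hi']
  have hb : recursionWeight b ∘ ι = Function.update (fun i => b i.succ) j (b 0 * b j.succ) := by
    funext i
    by_cases hi : i = j <;> simp [ι, recursionWeight, hi]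
  have hrange : ∀ s, s ∈ Set.range ι ↔ s = Sum.inl (some j) ∨ ∃ i ≠ j, s = Sum.inr i := by
    intro s
    constructor
    · rintro ⟨i, rfl⟩
      by_cases hi : i = j
      · simp [ι, hi]
      · exact Or.inr ⟨i, hi, by simp [ι, hi]⟩
    · rintro (rfl | ⟨i, hi, rfl⟩)
      · exact ⟨j, by simp [ι]⟩
      · exact ⟨i, by simp [ι, hi]⟩
  rw [Theta_eq_coeff_lawPolynomial, ← hb, hnat.coeff_lawPolynomial_comp hι]
  congr 1
  ext s
  rw [mapDomain_allOnes_apply hι]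
  simp only [hrange]
  rcases s with (_ | j') | i <;> simp [productFiber, Pi.single_apply, eq_comm]

theorem one_add_sum_monomial_productExponent_tmul (b : Fin (k + 1) → B) :
    (1 + ∑ s, monomial (productExponent k s) 1 ⊗ₜ[A] recursionWeight b s
      : MvPolynomial (Fin (k + 1)) A ⊗[A] B)
      = (1 + X 0 ⊗ₜ[A] b 0) * (1 + ∑ i : Fin k, X i.succ ⊗ₜ[A] b i.succ) := by
  have hmon : ∀ j : Fin k, (monomial (productExponent k (Sum.inl (some j))) 1
      : MvPolynomial (Fin (k + 1)) A) = X 0 * X j.succ := by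
    intro j
    rw [X, X, monomial_mul, one_mul]
    rfl
  rw [Fintype.sum_sum_type, Fintype.sum_option, mul_add, add_mul, Finset.mul_sum]
  simp only [hmon]
  simp only [productExponent, recursionWeight, Sum.elim_inl, Sum.elim_inr, Option.elim,
    Algebra.TensorProduct.tmul_mul_tmul, one_mul, mul_one, add_zero, add_mul,
    Finset.sum_add_distrib, ← X.eq_def]
  abel

theorem Theta_one_mul_Theta_eq_sum_coeff_productFiber {n : RawLaw A B} (hnat : IsNatural n)
    (hmult : IsMult n) (b : Fin (k + 1) → B) :
    Theta n 1 (fun _ => b 0) * Theta n k (fun i => b i.succ)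
      = ∑ o, coeff (productFiber k o) (lawPolynomial n (recursionWeight b)) := by
  have hzero : Function.Injective fun _ : Fin 1 => (0 : Fin (k + 1)) :=
    fun _ _ _ => Subsingleton.elim _ _
  have hones : (allOnes (Fin 1)).mapDomain (fun _ => (0 : Fin (k + 1)))
      + (allOnes (Fin k)).mapDomain Fin.succ = allOnes (Fin (k + 1)) := by
    ext t
    cases t using Fin.cases
    · simpa [Finsupp.mapDomain_of_notMem_range, Fin.succ_ne_zero]
        using Finsupp.mapDomain_apply hzero (allOnes (Fin 1)) 0
    · simp [Finsupp.mapDomain_apply (Fin.succ_injective k), Finsupp.mapDomain_of_notMem_range]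
  rw [Theta_eq_coeff_lawPolynomial, Theta_eq_coeff_lawPolynomial,
    ← coeff_mapDomain_add_mapDomain_rename_mul_rename hzero (Fin.succ_injective k)
      (fun _ i => (Fin.succ_ne_zero i).symm), hones, hnat.map_lawPolynomial,
    hnat.map_lawPolynomial, ← (hmult _).2]
  simp only [rename_X, Fin.sum_univ_one]
  rw [← one_add_sum_monomial_productExponent_tmul,
    hnat.coeff_lawPolynomial_subst _ _ (Finset.univ.image (productFiber k))
      fun m => (linearCombination_productExponent_eq_allOnes_iff k m).trans (by simp),
    Finset.sum_image fun o _ o' _ h => productFiber_injective k h]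

end Recursion

theorem statement4_general {A B : Type u} [CommRing A] [CommRing B] [Algebra A B]
    (n : RawLaw A B)
    (hnat : IsNatural n) (hmult : IsMult n)
    (k : ℕ) (b : Fin (k + 1) → B) :
    Theta n (k + 1) b
      = Theta n 1 (fun _ => b 0) * Theta n k (fun i => b i.succ)
        - ∑ i : Fin k, Theta n k (Function.update (fun j : Fin k => b j.succ) i (b 0 * b i.succ)) := by
  rw [Theta_succ_eq_coeff_productFiber_none hnat,
    Theta_one_mul_Theta_eq_sum_coeff_productFiber hnat hmult, Fintype.sum_option]
  simp only [Theta_update_eq_coeff_productFiber_some hnat]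
  ring

/-- If `n` is a multiplicative homogeneous polynomial law of degree `d`,
then for every `k ≥ 1` and `b : Fin (k+1) → B` (thought of as `b_1, …, b_{k+1}`) one has
`Θ_{k+1}(b_1, …, b_{k+1}) = θ(b_1)·Θ_k(b_2, …, b_{k+1}) − ∑_{i=2}^{k+1} Θ_k(b_2, …, b_1·b_i, …, b_{k+1})`,
where `θ = Θ_1`. -/
theorem statement4 {A B : Type u} [CommRing A] [CommRing B] [Algebra A B]
    (d : ℕ) (hd : 0 < d) (n : RawLaw A B)
    (hnat : IsNatural n) (hhom : IsHomog d n) (hmult : IsMult n)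
    (k : ℕ) (hk : 1 ≤ k) (b : Fin (k + 1) → B) :
    Theta n (k + 1) b
      = Theta n 1 (fun _ => b 0) * Theta n k (fun i => b i.succ)
        - ∑ i : Fin k, Theta n k (Function.update (fun j : Fin k => b j.succ) i (b 0 * b i.succ)) :=
  statement4_general n hnat hmult k b
end

section
/- Let f_1, …, f_d : B → A be A-algebra homomorphisms, and define a polynomial law n from B to A by n_{A'}(x) := ∏_{i=1}^d (id_{A'} ⊗ f_i)(x) for each commutative A-algebra A' and x ∈ A' ⊗_A B, where id_{A'} ⊗ f_i : A' ⊗_A B → A' ⊗_A A ≅ A'. Then n is a multiplicative homogeneous polynomial law of degree d, and its trace satisfies θ(b) = f_1(b) + ⋯ + f_d(b) for all b ∈ B. -/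
/-!
Each factor `id_{A'} ⊗ f_i : A' ⊗[A] B → A'` is an `A'`-algebra homomorphism, natural in `A'`;
a product of `d` such homomorphisms is therefore natural, multiplicative and homogeneous of
degree `d`. On `1 ⊗ 1 + t ⊗ b` the `i`-th factor takes the value `1 + f_i(b) t`, and the
coefficient of `t` in `∏ i, (1 + f_i(b) t)` is `∑ i, f_i(b)`.
-/

open scoped TensorProduct

universe u

variable {A B : Type u} [CommRing A] [CommRing B] [Algebra A B]

/-- The value at an `A`-algebra `A'` of the product law `n_{A'}(x) := ∏ i, (id_{A'} ⊗ f_i)(x)`,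
where `id_{A'} ⊗ f_i : A' ⊗[A] B → A' ⊗[A] A ≅ A'`. -/
noncomputable def prodLawAt {A B : Type u} [CommRing A] [CommRing B] [Algebra A B]
    (d : ℕ) (f : Fin d → (B →ₐ[A] A)) (A' : Type u) [CommRing A'] [Algebra A A']
    (x : A' ⊗[A] B) : A' :=
  ∏ i, TensorProduct.rid A A' (LinearMap.lTensor A' (f i).toLinearMap x)

/-- The product law `n` attached to `A`-algebra homomorphisms `f_1, …, f_d : B → A`. -/
noncomputable def prodLaw {A B : Type u} [CommRing A] [CommRing B] [Algebra A B]
    (d : ℕ) (f : Fin d → (B →ₐ[A] A)) : RawLaw A B :=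
  fun A' i1 i2 => @prodLawAt A B _ _ _ d f A' i1 i2

namespace MvPolynomial

variable {R σ : Type*} [CommRing R]

theorem constantCoeff_prod_one_add_smul_X {ι : Type*} (s : Finset ι) (c : ι → R) (j : σ) :
    constantCoeff (∏ i ∈ s, (1 + c i • X j) : MvPolynomial σ R) = 1 := by
  simp [map_prod]

theorem coeff_single_one_prod_one_add_smul_X {ι : Type*} (s : Finset ι) (c : ι → R) (j : σ) :
    coeff (Finsupp.single j 1) (∏ i ∈ s, (1 + c i • X j) : MvPolynomial σ R) = ∑ i ∈ s, c i := by
  classical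
  induction s using Finset.induction_on with
  | empty => simp [coeff_one, eq_comm]
  | insert i s hi ih =>
    rw [Finset.prod_insert hi, Finset.sum_insert hi, add_mul, one_mul, coeff_add, ih, smul_mul_assoc,
      coeff_smul, ← add_zero (Finsupp.single j 1), coeff_X_mul, ← constantCoeff_eq,
      constantCoeff_prod_one_add_smul_X, smul_eq_mul, mul_one, add_comm]

end MvPolynomial

theorem Theta_one_eq (n : RawLaw A B) (b : B) :
    Theta n 1 (fun _ => b) =
      MvPolynomial.coeff (Finsupp.single 0 1)
        (n (MvPolynomial (Fin 1) A) (1 + MvPolynomial.X 0 ⊗ₜ[A] b)) := by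
  rw [Theta, Fin.sum_univ_one, Finsupp.unique_single (Finsupp.equivFunOnFinite.symm _)]
  rfl

namespace AlgHom

noncomputable def baseChangeCounit (g : B →ₐ[A] A) (A' : Type u) [CommRing A'] [Algebra A A'] :
    A' ⊗[A] B →ₐ[A'] A' :=
  (Algebra.TensorProduct.rid A A' A').toAlgHom.comp (Algebra.TensorProduct.map (AlgHom.id A' A') g)

variable (g : B →ₐ[A] A) {A' : Type u} [CommRing A'] [Algebra A A']

@[simp]
theorem baseChangeCounit_tmul (a : A') (b : B) : g.baseChangeCounit A' (a ⊗ₜ b) = g b • a := by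
  simp [baseChangeCounit]

theorem baseChangeCounit_natural {A'' : Type u} [CommRing A''] [Algebra A A''] (φ : A' →ₐ[A] A'')
    (x : A' ⊗[A] B) :
    φ (g.baseChangeCounit A' x) = g.baseChangeCounit A'' (LinearMap.rTensor B φ.toLinearMap x) := by
  induction x using TensorProduct.induction_on with
  | zero => simp
  | tmul a b => simp
  | add x y hx hy => simp only [map_add, hx, hy]

end AlgHom

section

variable (d : ℕ) (f : Fin d → (B →ₐ[A] A))

theorem prodLaw_apply (A' : Type u) [CommRing A'] [Algebra A A']
    (x : A' ⊗[A] B) : prodLaw d f A' x = ∏ i, (f i).baseChangeCounit A' x :=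
  rfl

theorem isNatural_prodLaw : IsNatural (prodLaw d f) := by
  intro A' _ _ A'' _ _ φ x
  simp only [prodLaw_apply, map_prod, AlgHom.baseChangeCounit_natural]

theorem isHomog_prodLaw : IsHomog d (prodLaw d f) := by
  intro A' _ _ a x
  simp only [prodLaw_apply, map_smul, smul_eq_mul, Finset.prod_mul_distrib, Finset.prod_const,
    Finset.card_univ, Fintype.card_fin]

theorem isMult_prodLaw : IsMult (prodLaw d f) := fun A' _ _ =>
  ⟨by simp only [prodLaw_apply, map_one, Finset.prod_const_one],
   fun x y => by simp only [prodLaw_apply, map_mul, Finset.prod_mul_distrib]⟩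

theorem Theta_one_prodLaw (b : B) :
    Theta (prodLaw d f) 1 (fun _ => b) = ∑ i, f i b := by
  simp only [Theta_one_eq, prodLaw_apply, map_add, map_one, AlgHom.baseChangeCounit_tmul]
  exact MvPolynomial.coeff_single_one_prod_one_add_smul_X _ _ _

end

theorem statement7_general {A B : Type u} [CommRing A] [CommRing B] [Algebra A B]
    (d : ℕ) (f : Fin d → (B →ₐ[A] A)) :
    (IsNatural (prodLaw d f) ∧ IsHomog d (prodLaw d f) ∧ IsMult (prodLaw d f)) ∧
    (∀ b : B, Theta (prodLaw d f) 1 (fun _ => b) = ∑ i, f i b) :=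
  ⟨⟨isNatural_prodLaw d f, isHomog_prodLaw d f, isMult_prodLaw d f⟩, Theta_one_prodLaw d f⟩

/-- Let `f_1, …, f_d : B → A` be `A`-algebra homomorphisms and let
`n := f_1 ⋯ f_d` be the product law. Then `n` is a multiplicative homogeneous polynomial
law of degree `d`, and its trace satisfies `θ(b) = f_1(b) + ⋯ + f_d(b)` for all `b ∈ B`. -/
theorem statement7 {A B : Type u} [CommRing A] [CommRing B] [Algebra A B]
    (d : ℕ) (hd : 0 < d) (f : Fin d → (B →ₐ[A] A)) :
    (IsNatural (prodLaw d f) ∧ IsHomog d (prodLaw d f) ∧ IsMult (prodLaw d f)) ∧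
    (∀ b : B, Theta (prodLaw d f) 1 (fun _ => b) = ∑ i, f i b) :=
  statement7_general d f
end

section
/- Let n be a homogeneous polynomial law of degree d from B to A and let b ∈ B. Consider the characteristic polynomial χ_{n,b}(t) := n_{A[t]}(1 ⊗ b − t ⊗ 1_B) ∈ A[t]. Then χ_{n,b}(t) is a polynomial of degree at most d in t, and for every 0 ≤ k ≤ d its coefficient c_k of t^k satisfies (d−k)!·c_k = (−1)^k·Θ_{d−k}(b, …, b), with the convention Θ_0 := n_A(1_B). -/
open scoped TensorProduct

universe u

variable {A B : Type u} [CommRing A] [CommRing B] [Algebra A B]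

/-- `Θ_j(b, …, b)` with the convention `Θ_0 := n_A(1_B)`. -/
noncomputable def ThetaDiag {A B : Type u} [CommRing A] [CommRing B] [Algebra A B]
    (n : RawLaw A B) : ℕ → B → A
  | 0, _ => n A ((1 : A) ⊗ₜ[A] (1 : B))
  | j + 1, b => Theta n (j + 1) (fun _ => b)

/-! For `x y : B` put `P_{x,y}(X) = n(1 ⊗ x + X ⊗ y)` and
`G = n(Y ⊗ x + X ⊗ y) ∈ A[X][Y]`.
Naturality along the substitutions `(X, Y) ↦ (XY, Y)` and `(X, Y) ↦ (Y, XY)`, together with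
homogeneity, gives `G(XY, Y) = Y^d P_{x,y}(X)` and `G(Y, XY) = Y^d P_{y,x}(X)`; comparing the
coefficients of `Y^d` shows that `P_{y,x}` is the degree-`d` reversal of `P_{x,y}`.
The characteristic polynomial is `P_{b,1}(-X)`, and substituting `X ↦ t_1 + ⋯ + t_j` in
`P_{1,b}` yields `Θ_j(b, …, b) = j! · [X^j] P_{1,b}`, because `t_1 ⋯ t_j` occurs in
`(t_1 + ⋯ + t_j)^j` with coefficient `j!`. -/

open Polynomial
open scoped Polynomial.Bivariate

namespace Polynomial.Bivariate

variable {R : Type*} [CommRing R]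

noncomputable abbrev shearX : R[X][Y] →ₐ[R] R[X][Y] := aevalAeval (C X * Y) Y

noncomputable abbrev shearSwap : R[X][Y] →ₐ[R] R[X][Y] := aevalAeval Y (C X * Y)

lemma shearX_monomial (i j : ℕ) (r : R) :
    shearX (monomial j (monomial i r)) = monomial (i + j) (monomial i r) := by
  simp [← C_mul_X_pow_eq_monomial]
  ring

lemma shearSwap_monomial (i j : ℕ) (r : R) :
    shearSwap (monomial j (monomial i r)) = monomial (i + j) (monomial j r) := by
  simp [← C_mul_X_pow_eq_monomial]
  ring

lemma coeff_coeff_shearX (p : R[X][Y]) (i j : ℕ) :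
    ((shearX p).coeff j).coeff i = if i ≤ j then (p.coeff (j - i)).coeff i else 0 := by
  induction p using Polynomial.induction_on' with
  | add p q hp hq => simp only [map_add, coeff_add, hp, hq]; split_ifs <;> ring
  | monomial m q =>
    induction q using Polynomial.induction_on' with
    | add q r hq hr => simp only [map_add, coeff_add, hq, hr]; split_ifs <;> ring
    | monomial l r =>
      simp only [shearX_monomial, coeff_monomial, apply_ite (coeff · i), coeff_zero]
      split_ifs <;> first | rfl | omega

lemma coeff_coeff_shearSwap (p : R[X][Y]) (i j : ℕ) :
    ((shearSwap p).coeff j).coeff i = if i ≤ j then (p.coeff i).coeff (j - i) else 0 := by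
  induction p using Polynomial.induction_on' with
  | add p q hp hq => simp only [map_add, coeff_add, hp, hq]; split_ifs <;> ring
  | monomial m q =>
    induction q using Polynomial.induction_on' with
    | add q r hq hr => simp only [map_add, coeff_add, hq, hr]; split_ifs <;> ring
    | monomial l r =>
      simp only [shearSwap_monomial, coeff_monomial, apply_ite (coeff · i),
        apply_ite (coeff · (j - i)), coeff_zero]
      split_ifs <;> first | rfl | omega

end Polynomial.Bivariate

namespace MvPolynomial

variable {R : Type*} [CommRing R]

lemma coeff_ones_sum_X_pow (j m : ℕ) :
    coeff (Finsupp.equivFunOnFinite.symm fun _ ↦ 1)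
      ((∑ i : Fin j, X i : MvPolynomial (Fin j) R) ^ m) =
      if m = j then (j.factorial : R) else 0 := by
  have hmul : (Finsupp.equivFunOnFinite.symm fun _ : Fin j ↦ 1).multinomial = j.factorial := by
    simpa [Nat.multinomial] using Finsupp.multinomial_eq_of_support_subset
      (Finset.subset_univ (Finsupp.equivFunOnFinite.symm fun _ : Fin j ↦ 1).support)
  rw [coeff_sum_X_pow_of_fintype, hmul]
  simp [Finsupp.sum_fintype, eq_comm]

lemma coeff_ones_aeval_sum_X (j : ℕ) (p : R[X]) :
    coeff (Finsupp.equivFunOnFinite.symm fun _ ↦ 1) (Polynomial.aeval (∑ i : Fin j, X i) p)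
      = j.factorial * p.coeff j := by
  induction p using Polynomial.induction_on' with
  | add p q hp hq => simp only [map_add, coeff_add, hp, hq, Polynomial.coeff_add, mul_add]
  | monomial m r =>
    rw [Polynomial.aeval_monomial, algebraMap_eq, coeff_C_mul, coeff_ones_sum_X_pow,
      Polynomial.coeff_monomial]
    split_ifs <;> simp [mul_comm]

end MvPolynomial

section PolynomialLaw

variable {d : ℕ} {n : RawLaw A B}

lemma IsNatural.map_apply_eq (hnat : IsNatural n) {A' A'' : Type u} [CommRing A'] [Algebra A A']
    [CommRing A''] [Algebra A A''] (φ : A' →ₐ[A] A'') {x : A' ⊗[A] B} {y : A'' ⊗[A] B}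
    (h : φ.toLinearMap.rTensor B x = y) : φ (n A' x) = n A'' y :=
  h ▸ hnat A' A'' φ x

lemma IsNatural.map_apply_eq_pow_mul (hnat : IsNatural n) (hhom : IsHomog d n)
    {A' A'' : Type u} [CommRing A'] [Algebra A A'] [CommRing A''] [Algebra A A'']
    (φ : A' →ₐ[A] A'') {x : A' ⊗[A] B} {a : A''} {y : A'' ⊗[A] B}
    (h : φ.toLinearMap.rTensor B x = a • y) : φ (n A' x) = a ^ d * n A'' y := by
  rw [hnat.map_apply_eq φ h, hhom]

variable (n) in
noncomputable def lineRestrict (x y : B) : A[X] :=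
  n A[X] (1 ⊗ₜ x + X ⊗ₜ y)

open Polynomial.Bivariate in
theorem coeff_lineRestrict (hnat : IsNatural n) (hhom : IsHomog d n) (x y : B) (k : ℕ) :
    (lineRestrict n x y).coeff k = if k ≤ d then (lineRestrict n y x).coeff (d - k) else 0 := by
  set G : A[X][Y] := n A[X][Y] (Y ⊗ₜ x + C X ⊗ₜ y)
  have hC : ∀ x y : B, C (lineRestrict n x y) = n A[X][Y] (1 ⊗ₜ x + C X ⊗ₜ y) :=
    fun x y ↦ hnat.map_apply_eq (CAlgHom (R := A)) (by simp)
  have hX : shearX G = Y ^ d * C (lineRestrict n x y) := by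
    rw [hC, hnat.map_apply_eq_pow_mul hhom _]
    simp only [map_add, LinearMap.rTensor_tmul, AlgHom.toLinearMap_apply, aevalAeval_X,
      aevalAeval_Y, smul_add, TensorProduct.smul_tmul', smul_eq_mul, one_mul, mul_comm]
  have hSwap : shearSwap G = Y ^ d * C (lineRestrict n y x) := by
    rw [hC, hnat.map_apply_eq_pow_mul hhom _]
    simp only [map_add, LinearMap.rTensor_tmul, AlgHom.toLinearMap_apply, aevalAeval_X,
      aevalAeval_Y, smul_add, TensorProduct.smul_tmul', smul_eq_mul, one_mul, mul_comm,
      add_comm]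
  have hcoeff : ∀ (p : A[X]) (i : ℕ), ((Y ^ d * C p).coeff d).coeff i = p.coeff i := by simp
  have hP := coeff_coeff_shearX G k d
  have hQ := coeff_coeff_shearSwap G (d - k) d
  rw [hX, hcoeff] at hP
  rw [hSwap, hcoeff, if_pos (Nat.sub_le d k)] at hQ
  rw [hP]
  split_ifs with hk
  · rw [hQ, Nat.sub_sub_self hk]
  · rfl

theorem ThetaDiag_eq_factorial_mul_coeff_lineRestrict (hnat : IsNatural n) (j : ℕ) (b : B) :
    ThetaDiag n j b = j.factorial * (lineRestrict n 1 b).coeff j := by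
  cases j with
  | zero =>
    have h : aeval (0 : A) (lineRestrict n 1 b) = n A (1 ⊗ₜ 1) :=
      hnat.map_apply_eq _ (by simp)
    simp [ThetaDiag, ← h, coeff_zero_eq_aeval_zero]
  | succ j =>
    have h : aeval (∑ i : Fin (j + 1), MvPolynomial.X i) (lineRestrict n 1 b) =
        n _ ((1 : MvPolynomial (Fin (j + 1)) A ⊗[A] B) + ∑ i, MvPolynomial.X i ⊗ₜ b) :=
      hnat.map_apply_eq _ (by simp [Algebra.TensorProduct.one_def, TensorProduct.sum_tmul])
    rw [ThetaDiag, Theta, ← h, MvPolynomial.coeff_ones_aeval_sum_X]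

end PolynomialLaw

theorem statement9_general {A B : Type u} [CommRing A] [CommRing B] [Algebra A B]
    (d : ℕ) (n : RawLaw A B) (hnat : IsNatural n) (hhom : IsHomog d n)
    (b : B) :
    (n (Polynomial A)
        ((1 : Polynomial A) ⊗ₜ[A] b - Polynomial.X ⊗ₜ[A] (1 : B))).degree ≤ (d : ℕ) ∧
    ∀ k : ℕ, k ≤ d →
      ((d - k).factorial : A) *
          (n (Polynomial A)
            ((1 : Polynomial A) ⊗ₜ[A] b - Polynomial.X ⊗ₜ[A] (1 : B))).coeff k
        = (-1 : A) ^ k * ThetaDiag n (d - k) b := by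
  have hχ : n A[X] (1 ⊗ₜ b - X ⊗ₜ 1) = (lineRestrict n b 1).comp (C (-1) * X) :=
    (hnat.map_apply_eq (aeval (C (-1) * X))
      (by simp [sub_eq_add_neg, TensorProduct.neg_tmul])).symm
  have hcoeff : ∀ k, (n A[X] (1 ⊗ₜ b - X ⊗ₜ 1)).coeff k =
      if k ≤ d then (-1) ^ k * (lineRestrict n 1 b).coeff (d - k) else 0 := by
    intro k
    rw [hχ, comp_C_mul_X_coeff, coeff_lineRestrict hnat hhom]
    split_ifs <;> ring
  refine ⟨degree_le_iff_coeff_zero _ _ |>.mpr fun k hk ↦ ?_, fun k hk ↦ ?_⟩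
  · rw [hcoeff, if_neg (by exact_mod_cast hk.not_ge)]
  · rw [hcoeff, if_pos hk, ThetaDiag_eq_factorial_mul_coeff_lineRestrict hnat]
    ring

/-- Let `n` be a homogeneous polynomial law of degree `d` from `B` to `A`
and `b ∈ B`. The characteristic polynomial `χ_{n,b}(t) := n_{A[t]}(1 ⊗ b − t ⊗ 1)` has
degree at most `d`, and for every `0 ≤ k ≤ d` its coefficient `c_k` of `t^k` satisfies
`(d−k)!·c_k = (−1)^k·Θ_{d−k}(b, …, b)`, with the convention `Θ_0 := n_A(1_B)`. -/
theorem statement9 {A B : Type u} [CommRing A] [CommRing B] [Algebra A B]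
    (d : ℕ) (hd : 0 < d) (n : RawLaw A B) (hnat : IsNatural n) (hhom : IsHomog d n)
    (b : B) :
    (n (Polynomial A)
        ((1 : Polynomial A) ⊗ₜ[A] b - Polynomial.X ⊗ₜ[A] (1 : B))).degree ≤ (d : ℕ) ∧
    ∀ k : ℕ, k ≤ d →
      ((d - k).factorial : A) *
          (n (Polynomial A)
            ((1 : Polynomial A) ⊗ₜ[A] b - Polynomial.X ⊗ₜ[A] (1 : B))).coeff k
        = (-1 : A) ^ k * ThetaDiag n (d - k) b :=
  statement9_general d n hnat hhom b
end

section
/- For every l ≥ 0 and all elements b_1, …, b_{l+1} ∈ m = ker Q, one has Θ^θ_{l+1}(b_1, …, b_{l+1}) = (−1)^l · l! · ε · θ''(b_1·b_2 ⋯ b_{l+1}) in k[ε]/(ε²). -/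
universe u

/-- The recursively defined maps `Θ^θ_{j+1}` attached to a map `θ : B → A`:
`ThetaRec θ j` is `Θ^θ_{j+1}`, with `Θ^θ_1 = θ` and
`Θ^θ_{j+2}(b_1,…,b_{j+2}) = θ(b_1)·Θ^θ_{j+1}(b_2,…,b_{j+2}) − ∑_{i=2}^{j+2} Θ^θ_{j+1}(b_2,…,b_1·b_i,…,b_{j+2})`. -/
def ThetaRec {A B : Type u} [CommRing A] [CommRing B] (θ : B → A) :
    (k : ℕ) → (Fin (k + 1) → B) → A
  | 0, b => θ (b 0)
  | k + 1, b =>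
      θ (b 0) * ThetaRec θ k (fun i => b i.succ)
        - ∑ i : Fin (k + 1), ThetaRec θ k (Function.update (fun j : Fin (k + 1) => b j.succ) i (b 0 * b i.succ))

/-!
On `m` the map `θ` is `ε · θ''`, so in the recursion the product term `θ(b_1) · Θ_l(…)` is a
multiple of `ε² = 0`, while each of the `l + 1` summands `Θ_l(b_2, …, b_1 b_i, …)` again has all
entries in `m` and the same total product `b_1 ⋯ b_{l+1}`. Induction gives the factor
`(-1)^l · l!`.
-/

theorem Finset.prod_update_mul_self {M ι : Type*} [CommMonoid M] [Fintype ι] [DecidableEq ι]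
    (c : ι → M) (i : ι) (a : M) :
    ∏ j, Function.update c i (a * c i) j = a * ∏ j, c j := by
  rw [Finset.prod_update_of_mem (Finset.mem_univ i), mul_assoc,
    ← Finset.prod_eq_mul_prod_sdiff_singleton_of_mem (Finset.mem_univ i)]

theorem Ideal.update_mul_mem {R ι : Type*} [CommRing R] [DecidableEq ι] {I : Ideal R}
    {c : ι → R} (hc : ∀ j, c j ∈ I) (i : ι) {a : R} (ha : a ∈ I) (j : ι) :
    Function.update c i (a * c i) j ∈ I := by
  rcases eq_or_ne j i with rfl | hji
  · rw [Function.update_self]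
    exact I.mul_mem_right _ ha
  · rw [Function.update_of_ne hji]
    exact hc j

theorem ThetaRec_eq_of_mul_self_eq_zero {A B : Type u} [CommRing A] [CommRing B]
    {θ : B → A} {I : Ideal B} {e : A} (he : e * e = 0) (g : B → A)
    (hθ : ∀ x ∈ I, θ x = e * g x) (l : ℕ) (b : Fin (l + 1) → B) (hb : ∀ i, b i ∈ I) :
    ThetaRec θ l b = (-1) ^ l * (l.factorial : A) * e * g (∏ i, b i) := by
  induction l with
  | zero => simp [ThetaRec, hθ _ (hb 0)]
  | succ l ih =>
    have htail : ∀ i : Fin (l + 1), b i.succ ∈ I := fun i => hb i.succ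
    have hsummand : ∀ i : Fin (l + 1),
        ThetaRec θ l (Function.update (fun j => b j.succ) i (b 0 * b i.succ))
          = (-1) ^ l * (l.factorial : A) * e * g (∏ i, b i) := by
      intro i
      rw [ih _ (Ideal.update_mul_mem htail i (hb 0)),
        Finset.prod_update_mul_self (fun j : Fin (l + 1) => b j.succ),
        ← Fin.prod_univ_succ]
    have hhead : θ (b 0) * ThetaRec θ l (fun i => b i.succ) = 0 := by
      rw [hθ _ (hb 0), ih _ htail]
      linear_combination
        (g (b 0) * (-1) ^ l * (l.factorial : A) * g (∏ i : Fin (l + 1), b i.succ)) * he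
    rw [ThetaRec, hhead, Finset.sum_congr rfl fun i _ => hsummand i, Finset.sum_const,
      Finset.card_univ, Fintype.card_fin, Nat.factorial_succ]
    push_cast
    ring

theorem statement10_general {K B : Type u} [Field K] [CommRing B] [Algebra K B]
    (d : ℕ) (Q : B →ₐ[K] K) (θ'' : B →ₗ[K] K)
    (θ : B → DualNumber K)
    (hθ : θ = fun b => algebraMap K (DualNumber K) ((d : K) * Q b)
        + DualNumber.eps * algebraMap K (DualNumber K) (θ'' b))
    (l : ℕ) (b : Fin (l + 1) → B) (hb : ∀ i, b i ∈ RingHom.ker Q.toRingHom) :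
    ThetaRec θ l b
      = (-1 : DualNumber K) ^ l * (l.factorial : DualNumber K) * DualNumber.eps *
          algebraMap K (DualNumber K) (θ'' (∏ i, b i)) := by
  have hθ_ker : ∀ x ∈ RingHom.ker Q.toRingHom,
      θ x = DualNumber.eps * algebraMap K (DualNumber K) (θ'' x) := by
    intro x hx
    have hQx : Q x = 0 := hx
    simp [hθ, hQx]
  exact ThetaRec_eq_of_mul_self_eq_zero DualNumber.eps_mul_eps _ hθ_ker l b hb

/-- Let `k` be a field, `B` a commutative `k`-algebra, `Q : B → k` a
`k`-algebra homomorphism with kernel `m`, `θ'' : B → k` a `k`-linear map with `θ''(1) = 0`,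
and `θ : B → k[ε]/(ε²)` given by `θ(b) := d·Q(b) + ε·θ''(b)`. Then for every `l ≥ 0` and
all `b_1, …, b_{l+1} ∈ m` one has
`Θ^θ_{l+1}(b_1, …, b_{l+1}) = (−1)^l · l! · ε · θ''(b_1 ⋯ b_{l+1})`. -/
theorem statement10 {K B : Type u} [Field K] [CommRing B] [Algebra K B]
    (d : ℕ) (hd : 0 < d) (Q : B →ₐ[K] K) (θ'' : B →ₗ[K] K) (hθ'' : θ'' 1 = 0)
    (θ : B → DualNumber K)
    (hθ : θ = fun b => algebraMap K (DualNumber K) ((d : K) * Q b)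
        + DualNumber.eps * algebraMap K (DualNumber K) (θ'' b))
    (l : ℕ) (b : Fin (l + 1) → B) (hb : ∀ i, b i ∈ RingHom.ker Q.toRingHom) :
    ThetaRec θ l b
      = (-1 : DualNumber K) ^ l * (l.factorial : DualNumber K) * DualNumber.eps *
          algebraMap K (DualNumber K) (θ'' (∏ i, b i)) :=
  statement10_general d Q θ'' θ hθ l b hb
end

section
/- Assume the characteristic of k is either 0 or a prime p with p > d. Then Θ^θ_{d+1}(b_1, …, b_{d+1}) = 0 for all b_1, …, b_{d+1} ∈ B if and only if θ''(x) = 0 for every x ∈ m^{d+1}. (This identifies the dual of the tangent space at the cycle [dQ] of the d-th symmetric power of Spec B with m/m^{d+1}.) -/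
/-!
`Θ^θ_n` is multilinear when `θ` is linear, and symmetric for any `θ`: invariance under swapping
the first two arguments comes from expanding the recursion twice, the double sum that appears
being symmetric. A leading argument `1` gives `Θ^θ_{n+1}(1, r) = (θ(1) - n) Θ^θ_n(r)`, so by
symmetry `Θ^θ_{d+1}` vanishes as soon as one argument is `1`, because `θ(1) = d`. Writing
`b_i = (b_i - Q(b_i)) + Q(b_i)·1` and expanding multilinearly, only the term with all arguments
in `m` survives; there `θ = ε·θ''` has square zero and the recursion collapses to
`Θ^θ_{n+1}(x) = (-1)^n n! θ(x_0 ⋯ x_n)`. Hence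
`Θ^θ_{d+1}(b) = (-1)^d d! ε θ''(∏ (b_i - Q(b_i)))`, and `d!` is invertible in `k`; the products
`∏ (b_i - Q(b_i))` are exactly the products of `d + 1` elements of `m`, which span `m^{d+1}`.
-/

universe u

open Finset Function Equiv
open scoped Nat

section Recursion

variable {A B : Type u} [CommRing A] [CommRing B] (θ : B → A)

theorem thetaRec_cons (n : ℕ) (a : B) (r : Fin (n + 1) → B) :
    ThetaRec θ (n + 1) (Fin.cons a r) =
      θ a * ThetaRec θ n r - ∑ i, ThetaRec θ n (update r i (a * r i)) :=
  rfl

theorem thetaRec_cons_one (n : ℕ) (r : Fin (n + 1) → B) :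
    ThetaRec θ (n + 1) (Fin.cons 1 r) = (θ 1 - (n + 1)) * ThetaRec θ n r := by
  simp [thetaRec_cons, sub_mul]

theorem thetaRec_cons_comp_perm {n : ℕ} (σ : Perm (Fin (n + 1)))
    (hσ : ∀ r, ThetaRec θ n (r ∘ σ) = ThetaRec θ n r) (a : B) (r : Fin (n + 1) → B) :
    ThetaRec θ (n + 1) (Fin.cons a (r ∘ σ)) = ThetaRec θ (n + 1) (Fin.cons a r) := by
  rw [thetaRec_cons, thetaRec_cons, hσ,
    ← Equiv.sum_comp σ (fun i => ThetaRec θ n (update r i (a * r i)))]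
  congr 2 with i
  rw [← hσ (update r (σ i) _), update_comp_equiv, symm_apply_apply, comp_apply]

theorem sum_sum_thetaRec_update_update_comm (n : ℕ) (r : Fin (n + 1) → B) (a c : B) :
    ∑ k, ∑ l, ThetaRec θ n (update (update r k (a * r k)) l (c * update r k (a * r k) l)) =
      ∑ k, ∑ l, ThetaRec θ n (update (update r k (c * r k)) l (a * update r k (c * r k) l)) := by
  rw [Finset.sum_comm]
  refine sum_congr rfl fun l _ => sum_congr rfl fun k _ => ?_
  rcases eq_or_ne k l with rfl | hkl
  · simp [mul_left_comm]
  · rw [update_of_ne hkl.symm, update_of_ne hkl, update_comm hkl.symm]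

theorem thetaRec_cons_cons (n : ℕ) (a c : B) (r : Fin (n + 1) → B) :
    ThetaRec θ (n + 2) (Fin.cons a (Fin.cons c r)) =
      θ a * (θ c * ThetaRec θ n r - ∑ k, ThetaRec θ n (update r k (c * r k)))
        - ThetaRec θ (n + 1) (Fin.cons (a * c) r)
        - ∑ k, (θ c * ThetaRec θ n (update r k (a * r k))
          - ∑ l, ThetaRec θ n (update (update r k (a * r k)) l (c * update r k (a * r k) l))) := by
  rw [thetaRec_cons, Fin.sum_univ_succ]
  simp only [Fin.cons_zero, Fin.cons_succ, Fin.update_cons_zero, ← Fin.cons_update, thetaRec_cons]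
  ring

theorem thetaRec_cons_cons_comm (n : ℕ) (a c : B) (r : Fin n → B) :
    ThetaRec θ (n + 1) (Fin.cons a (Fin.cons c r)) =
      ThetaRec θ (n + 1) (Fin.cons c (Fin.cons a r)) := by
  cases n with
  | zero => simp [ThetaRec, mul_comm]
  | succ n =>
    simp only [thetaRec_cons_cons, sum_sub_distrib, ← mul_sum, mul_comm a c,
      sum_sum_thetaRec_update_update_comm θ n r a c]
    ring

theorem thetaRec_comp_swap_zero_one (n : ℕ) (b : Fin (n + 2) → B) :
    ThetaRec θ (n + 1) (b ∘ swap 0 1) = ThetaRec θ (n + 1) b := by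
  obtain ⟨a, c, r, rfl⟩ : ∃ a c r, b = Fin.cons a (Fin.cons c r) :=
    ⟨b 0, b 1, fun k => b k.succ.succ, by
      ext i; exact Fin.cases rfl (Fin.cases rfl fun _ => rfl) i⟩
  have hswap : (Fin.cons a (Fin.cons c r) : Fin (n + 2) → B) ∘ swap 0 1 =
      Fin.cons c (Fin.cons a r) := by
    ext i
    refine Fin.cases ?_ (Fin.cases ?_ fun k => ?_) i
    · simp
    · simp
    · have hk : k.succ.succ ≠ 1 := by
        rw [← Fin.succ_zero_eq_one]
        exact (Fin.succ_injective _).ne (Fin.succ_ne_zero k)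
      rw [comp_apply, swap_apply_of_ne_of_ne (Fin.succ_ne_zero _) hk]
      rfl
  rw [hswap, thetaRec_cons_cons_comm]

theorem thetaRec_comp_swap_zero :
    ∀ (n : ℕ) (b : Fin (n + 1) → B) (j : Fin (n + 1)),
      ThetaRec θ n (b ∘ swap 0 j) = ThetaRec θ n b
  | 0, b, j => by rw [Fin.fin_one_eq_zero j, swap_self, coe_refl, comp_id]
  | n + 1, b, j => by
    have swap_tail (k : Fin (n + 1)) (b : Fin (n + 2) → B) :
        ThetaRec θ (n + 1) (b ∘ swap 1 k.succ) = ThetaRec θ (n + 1) b := by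
      have hb : b ∘ swap 1 k.succ = Fin.cons (b 0) (Fin.tail b ∘ swap 0 k) := by
        ext i
        refine Fin.cases ?_ (fun i => ?_) i
        · rw [comp_apply, swap_apply_of_ne_of_ne zero_ne_one (Fin.succ_ne_zero k).symm]
          rfl
        · rw [comp_apply, ← Fin.succ_zero_eq_one, (Fin.succ_injective _).swap_apply]
          rfl
      rw [hb, thetaRec_cons_comp_perm θ _ (thetaRec_comp_swap_zero n · k), Fin.cons_self_tail]
    induction j using Fin.cases with
    | zero => simp
    | succ k =>
      -- `swap 0 (k + 1)` is `swap 0 1` conjugated by the tail transposition `swap 1 (k + 1)`.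
      rw [swap_comm, ← swap_mul_swap_mul_swap zero_ne_one (Fin.succ_ne_zero k).symm,
        Perm.coe_mul, Perm.coe_mul, ← comp_assoc, ← comp_assoc, swap_tail,
        thetaRec_comp_swap_zero_one, swap_tail]

theorem thetaRec_eq_zero_of_eq_one {d : ℕ} (hθ : θ 1 = d) (y : Fin (d + 1) → B) (i : Fin (d + 1))
    (hi : y i = 1) : ThetaRec θ d y = 0 := by
  cases d with
  | zero => rw [Fin.fin_one_eq_zero i] at hi; simp [ThetaRec, hi, hθ]
  | succ n =>
    rw [← thetaRec_comp_swap_zero θ _ y i, ← Fin.cons_self_tail (y ∘ swap 0 i)]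
    simp [hi, thetaRec_cons_one, hθ]

theorem thetaRec_of_forall_mem (I : Ideal B) (hI : ∀ x ∈ I, ∀ y ∈ I, θ x * θ y = 0) :
    ∀ (n : ℕ) (x : Fin (n + 1) → B), (∀ i, x i ∈ I) →
      ThetaRec θ n x = ((-1) ^ n * n ! : A) * θ (∏ i, x i)
  | 0, x, _ => by simp [ThetaRec]
  | n + 1, x, hx => by
    have IH := thetaRec_of_forall_mem I hI n
    rw [← Fin.cons_self_tail x, thetaRec_cons]
    set r := Fin.tail x
    have hr : ∀ i, r i ∈ I := fun i => hx i.succ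
    have hprod : ∏ i, r i ∈ I := I.prod_mem (mem_univ 0) (hr 0)
    have hupdate (i : Fin (n + 1)) :
        ThetaRec θ n (update r i (x 0 * r i)) = ((-1) ^ n * n ! : A) * θ (x 0 * ∏ i, r i) := by
      have hmem (j : Fin (n + 1)) : update r i (x 0 * r i) j ∈ I := by
        rcases eq_or_ne j i with rfl | hji
        · simpa using I.mul_mem_left _ (hr j)
        · simpa [hji] using hr j
      rw [IH _ hmem, prod_update_of_mem (mem_univ i),
        prod_eq_mul_prod_sdiff_singleton_of_mem (mem_univ i), mul_assoc (x 0)]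
    rw [IH r hr, sum_congr rfl fun i _ => hupdate i, sum_const, Finset.card_univ, Fintype.card_fin,
      Fin.prod_cons, mul_left_comm, hI _ (hx 0) _ hprod, nsmul_eq_mul, Nat.factorial_succ]
    push_cast
    ring

end Recursion

section Multilinear

variable {R A B : Type u} [CommRing R] [CommRing A] [CommRing B] [Algebra R A] [Algebra R B]
  (θ : B →ₗ[R] A)

theorem thetaRec_update_smul_add_smul :
    ∀ (n : ℕ) (b : Fin (n + 1) → B) (i : Fin (n + 1)) (c c' : R) (x x' : B),
      ThetaRec θ n (update b i (c • x + c' • x')) =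
        c • ThetaRec θ n (update b i x) + c' • ThetaRec θ n (update b i x')
  | 0, b, i, c, c', x, x' => by
    rw [Fin.fin_one_eq_zero i]
    simp [ThetaRec]
  | n + 1, b, i, c, c', x, x' => by
    have IH := thetaRec_update_smul_add_smul n
    rw [← Fin.cons_self_tail b]
    induction i using Fin.cases with
    | zero =>
      simp only [Fin.update_cons_zero, thetaRec_cons, map_add, map_smul, add_mul, smul_mul_assoc,
        IH, sum_add_distrib, ← smul_sum]
      module
    | succ j =>
      have hterm (k : Fin (n + 1)) :
          ThetaRec θ n (update (update (Fin.tail b) j (c • x + c' • x')) k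
              (b 0 * update (Fin.tail b) j (c • x + c' • x') k)) =
            c • ThetaRec θ n
              (update (update (Fin.tail b) j x) k (b 0 * update (Fin.tail b) j x k)) +
            c' • ThetaRec θ n
              (update (update (Fin.tail b) j x') k (b 0 * update (Fin.tail b) j x' k)) := by
        rcases eq_or_ne k j with rfl | hkj
        · simp only [update_idem, update_self, mul_add, mul_smul_comm, IH]
        · simp only [update_of_ne hkj, update_comm hkj.symm, IH]
      simp only [← Fin.cons_update, thetaRec_cons, hterm, IH, sum_add_distrib, ← smul_sum, mul_add,
        mul_smul_comm]
      module

def thetaRecMultilinear (n : ℕ) : MultilinearMap R (fun _ : Fin (n + 1) => B) A where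
  toFun := ThetaRec θ n
  map_update_add' := by
    intro inst b i x x'
    obtain rfl := Subsingleton.elim inst (instDecidableEqFin _)
    convert thetaRec_update_smul_add_smul θ n b i 1 1 x x' using 2 <;> simp
  map_update_smul' := by
    intro inst b i c x
    obtain rfl := Subsingleton.elim inst (instDecidableEqFin _)
    convert thetaRec_update_smul_add_smul θ n b i c 0 x 0 using 2 <;> simp

theorem thetaRec_add_smul_one {d : ℕ} (hθ1 : θ 1 = d) (I : Ideal B)
    (hI : ∀ x ∈ I, ∀ y ∈ I, θ x * θ y = 0) (x : Fin (d + 1) → B) (hx : ∀ i, x i ∈ I)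
    (q : Fin (d + 1) → R) :
    ThetaRec θ d (fun i => x i + q i • 1) = ((-1) ^ d * d ! : A) * θ (∏ i, x i) := by
  change thetaRecMultilinear θ d (x + fun i => q i • 1) = _
  rw [MultilinearMap.map_add_univ, sum_eq_single_of_mem univ (mem_univ _), piecewise_univ]
  · exact thetaRec_of_forall_mem θ I hI d x hx
  · intro S _ hS
    obtain ⟨i, -, hi⟩ := exists_of_ssubset (ssubset_univ_iff.2 hS)
    set y := S.piecewise x fun i => q i • (1 : B)
    have hy : y = update y i (q i • 1) := by simp [y, hi]
    rw [hy, MultilinearMap.map_update_smul]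
    exact smul_eq_zero_of_right _ (thetaRec_eq_zero_of_eq_one θ hθ1 _ i (update_self ..))

end Multilinear

theorem Ideal.restrictScalars_pow_le_ker {R S M : Type*} [CommSemiring R] [CommSemiring S]
    [Algebra R S] [AddCommMonoid M] [Module R M] (T : S →ₗ[R] M) (I : Ideal S) {n : ℕ}
    (hn : n ≠ 0) (hT : ∀ f : Fin n → S, (∀ i, f i ∈ I) → T (∏ i, f i) = 0) :
    (I ^ n).restrictScalars R ≤ LinearMap.ker T := by
  rw [Submodule.restrictScalars_pow hn, Submodule.pow_eq_span_pow_set, Submodule.span_le]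
  intro y hy
  obtain ⟨f, rfl⟩ := Set.mem_pow.1 hy
  rw [List.prod_ofFn]
  exact hT (fun i => f i) fun i => (f i).2

theorem cast_factorial_ne_zero {K : Type*} [Field K] {d : ℕ}
    (hchar : CharZero K ∨ ∃ p : ℕ, p.Prime ∧ CharP K p ∧ d < p) : (d ! : K) ≠ 0 := by
  rcases hchar with hK | ⟨p, hp, hKp, hdp⟩
  · exact Nat.cast_ne_zero.2 d.factorial_ne_zero
  · rw [Ne, CharP.cast_eq_zero_iff K p, hp.dvd_factorial]
    omega

section DualNumber

open DualNumber TrivSqZeroExt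

variable {K B : Type u} [Field K] [CommRing B] [Algebra K B]

def dualNumberTheta (d : ℕ) (Q : B →ₐ[K] K) (T : B →ₗ[K] K) : B →ₗ[K] DualNumber K where
  toFun b := algebraMap K (DualNumber K) ((d : K) * Q b) + ε * algebraMap K (DualNumber K) (T b)
  map_add' x y := by simp only [map_add, mul_add]; ring
  map_smul' c x := by
    rw [map_smul, map_smul]
    simp only [smul_eq_mul, RingHom.id_apply, Algebra.smul_def, map_mul]
    ring

theorem dualNumberTheta_one (d : ℕ) (Q : B →ₐ[K] K) {T : B →ₗ[K] K} (hT : T 1 = 0) :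
    dualNumberTheta d Q T 1 = d := by
  simp [dualNumberTheta, hT]

theorem dualNumberTheta_of_mem_ker (d : ℕ) (Q : B →ₐ[K] K) (T : B →ₗ[K] K) {x : B}
    (hx : x ∈ RingHom.ker Q.toRingHom) : dualNumberTheta d Q T x = inr (T x) := by
  have hQx : Q x = 0 := hx
  ext <;> simp [dualNumberTheta, hQx, algebraMap_eq_inl]

theorem dualNumberTheta_mul_of_mem_ker (d : ℕ) (Q : B →ₐ[K] K) (T : B →ₗ[K] K) :
    ∀ x ∈ RingHom.ker Q.toRingHom, ∀ y ∈ RingHom.ker Q.toRingHom,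
      dualNumberTheta d Q T x * dualNumberTheta d Q T y = 0 := fun x hx y hy => by
  rw [dualNumberTheta_of_mem_ker d Q T hx, dualNumberTheta_of_mem_ker d Q T hy, inr_mul_inr]

theorem signed_factorial_mul_inr_eq_zero_iff {d : ℕ} (hd : (d ! : K) ≠ 0) (t : K) :
    ((-1) ^ d * d ! : DualNumber K) * inr t = 0 ↔ t = 0 := by
  have : ((-1) ^ d * d ! : DualNumber K) * inr t = inr (t * ((-1) ^ d * d !)) := by
    ext <;> simp
  rw [this, ← inr_zero, inr_injective.eq_iff]
  simp [hd]

end DualNumber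

theorem statement11_general {K B : Type u} [Field K] [CommRing B] [Algebra K B]
    (d : ℕ)
    (hchar : CharZero K ∨ ∃ p : ℕ, p.Prime ∧ CharP K p ∧ d < p)
    (Q : B →ₐ[K] K) (θ'' : B →ₗ[K] K) (hθ'' : θ'' 1 = 0)
    (θ : B → DualNumber K)
    (hθ : θ = fun b => algebraMap K (DualNumber K) ((d : K) * Q b)
        + DualNumber.eps * algebraMap K (DualNumber K) (θ'' b)) :
    (∀ b : Fin (d + 1) → B, ThetaRec θ d b = 0) ↔
      (∀ x ∈ (RingHom.ker Q.toRingHom) ^ (d + 1), θ'' x = 0) := by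
  obtain rfl : θ = dualNumberTheta d Q θ'' := hθ
  set m := RingHom.ker Q.toRingHom
  have hmul := dualNumberTheta_mul_of_mem_ker d Q θ''
  constructor
  · intro hΘ x hx
    refine (Ideal.restrictScalars_pow_le_ker θ'' m d.succ_ne_zero fun f hf => ?_) hx
    have := thetaRec_of_forall_mem _ m hmul d f hf
    rwa [hΘ, dualNumberTheta_of_mem_ker d Q θ'' (m.prod_mem (mem_univ 0) (hf 0)), eq_comm,
      signed_factorial_mul_inr_eq_zero_iff (cast_factorial_ne_zero hchar)] at this
  · intro hvanish b
    set x : Fin (d + 1) → B := fun i => b i - algebraMap K B (Q (b i))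
    have hx (i : Fin (d + 1)) : x i ∈ m := by simp [x, m]
    have hb : b = fun i => x i + Q (b i) • 1 := by simp [x, Algebra.algebraMap_eq_smul_one]
    have hxpow : ∏ i, x i ∈ m ^ (d + 1) := by
      simpa using Ideal.prod_mem_prod (s := univ) (I := fun _ => m) fun i _ => hx i
    rw [hb, thetaRec_add_smul_one _ (dualNumberTheta_one d Q hθ'') m hmul x hx,
      dualNumberTheta_of_mem_ker d Q θ'' (m.prod_mem (mem_univ 0) (hx 0)), hvanish _ hxpow,
      TrivSqZeroExt.inr_zero, mul_zero]

/-- Let `k` be a field of characteristic `0` or `p > d`, `B` a commutative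
`k`-algebra, `Q : B → k` a `k`-algebra homomorphism with kernel `m`, `θ'' : B → k` a
`k`-linear map with `θ''(1) = 0`, and `θ : B → k[ε]/(ε²)` given by
`θ(b) := d·Q(b) + ε·θ''(b)`. Then `Θ^θ_{d+1} ≡ 0` if and only if `θ''` vanishes on
`m^{d+1}`. (This identifies the dual of the tangent space of `Sym^d (Spec B)` at `[dQ]`
with `m/m^{d+1}`.) -/
theorem statement11 {K B : Type u} [Field K] [CommRing B] [Algebra K B]
    (d : ℕ) (hd : 0 < d)
    (hchar : CharZero K ∨ ∃ p : ℕ, p.Prime ∧ CharP K p ∧ d < p)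
    (Q : B →ₐ[K] K) (θ'' : B →ₗ[K] K) (hθ'' : θ'' 1 = 0)
    (θ : B → DualNumber K)
    (hθ : θ = fun b => algebraMap K (DualNumber K) ((d : K) * Q b)
        + DualNumber.eps * algebraMap K (DualNumber K) (θ'' b)) :
    (∀ b : Fin (d + 1) → B, ThetaRec θ d b = 0) ↔
      (∀ x ∈ (RingHom.ker Q.toRingHom) ^ (d + 1), θ'' x = 0) :=
  statement11_general d hchar Q θ'' hθ'' θ hθ
end

section
/- Let A be a commutative ring, M an A-module, P an invertible A-module, and n a natural number. Then there is an isomorphism of A-modules Λ^n_A(M ⊗_A P) ≅ Λ^n_A(M) ⊗_A P^{⊗n}, where Λ^n_A denotes the n-th exterior power over A and P^{⊗n} the n-th tensor power of P over A. -/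
/-!
Send `(m₁ ∧ ⋯ ∧ mₙ) ⊗ (p₁ ⊗ ⋯ ⊗ pₙ)` to `(m₁ ⊗ p₁) ∧ ⋯ ∧ (mₙ ⊗ pₙ)`. This is alternating in the
`mᵢ` because `P` is invertible: the swap of `P ⊗ P` is the identity, i.e.
`e (q ⊗ f) • p = e (p ⊗ f) • q`, so after multiplying by the square of any `e (p ⊗ f)` — and these
generate the unit ideal — the two `P`-entries at positions carrying equal `mᵢ` become equal.
The map is onto since pure tensors span `M ⊗ P`. The same construction for `M ⊗ P` and `P'`,
followed by `(M ⊗ P) ⊗ P' ≅ M`, is a left inverse of the map tensored with `P'^{⊗n}`; this module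
is invertible, so tensoring with it reflects injectivity.
-/

open scoped TensorProduct

universe u

theorem eq_zero_of_forall_sq_smul_eq_zero {A N : Type*} [CommRing A] [AddCommGroup N]
    [Module A N] {s : Set A} (hs : Ideal.span s = ⊤) {x : N} (hx : ∀ a ∈ s, a ^ 2 • x = 0) :
    x = 0 := by
  have hker : Ideal.span ((· ^ 2) '' s) ≤ LinearMap.ker (LinearMap.toSpanSingleton A N x) := by
    rw [Ideal.span_le]
    rintro _ ⟨a, ha, rfl⟩
    exact hx a ha
  rw [Ideal.span_pow_eq_top s hs, top_le_iff] at hker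
  simpa using LinearMap.congr_fun (LinearMap.ker_eq_top.mp hker) 1

noncomputable def tensorPowerSuccEquiv {A : Type*} [CommRing A] (n : ℕ) (X : Type*)
    [AddCommGroup X] [Module A X] : ⨂[A]^(n + 1) X ≃ₗ[A] ⨂[A]^n X ⊗[A] X :=
  PiTensorProduct.reindex A (fun _ => X) finSumFinEquiv.symm ≪≫ₗ
    (PiTensorProduct.tmulEquiv A X).symm ≪≫ₗ
    (PiTensorProduct.subsingletonEquiv 0).lTensor _

theorem tensorPowerSuccEquiv_tprod {A : Type*} [CommRing A] (n : ℕ) {X : Type*}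
    [AddCommGroup X] [Module A X] (v : Fin (n + 1) → X) :
    tensorPowerSuccEquiv n X (PiTensorProduct.tprod A v) =
      PiTensorProduct.tprod A (fun i : Fin n => v i.castSucc) ⊗ₜ v (Fin.last n) := by
  simp [tensorPowerSuccEquiv]
  rfl

section Invertible

variable {A : Type*} [CommRing A] {P P' : Type*} [AddCommGroup P] [Module A P]
  [AddCommGroup P'] [Module A P'] (e : P ⊗[A] P' ≃ₗ[A] A)

include e

theorem smul_eq_smul_of_tensorProduct_equiv (p q : P) (f : P') :
    e (q ⊗ₜ f) • p = e (p ⊗ₜ f) • q := by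
  have := Module.Invertible.left e
  let φ : P ⊗[A] P →ₗ[A] P :=
    TensorProduct.rid A P ∘ₗ (e.toLinearMap ∘ₗ (TensorProduct.mk A P P').flip f).lTensor P
  simpa [φ] using congrArg φ (Module.Invertible.tmul_comm (m₁ := p) (m₂ := q))

theorem span_range_equiv_tmul_eq_top :
    Ideal.span (Set.range fun x : P × P' => e (x.1 ⊗ₜ x.2)) = ⊤ := by
  have h := congrArg (Submodule.map e.toLinearMap) (TensorProduct.span_tmul_eq_top A P P')
  rw [Submodule.map_span, Submodule.map_top, LinearEquiv.range] at h
  rw [← h]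
  congr 1
  ext a
  simp

theorem MultilinearMap.eq_zero_of_map_eq_zero_of_eq {ι N : Type*} [DecidableEq ι]
    [AddCommGroup N] [Module A N] (Φ : MultilinearMap A (fun _ : ι => P) N) {i j : ι}
    (hΦ : ∀ q, q i = q j → Φ q = 0) (q : ι → P) : Φ q = 0 := by
  have move (p : P) (f : P') (q : ι → P) (k : ι) :
      e (p ⊗ₜ f) • Φ q = e (q k ⊗ₜ f) • Φ (Function.update q k p) := by
    rw [← Φ.map_update_smul, smul_eq_smul_of_tensorProduct_equiv e p (q k), Φ.map_update_smul,
      Function.update_eq_self]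
  refine eq_zero_of_forall_sq_smul_eq_zero (span_range_equiv_tmul_eq_top e) ?_
  rintro _ ⟨⟨p, f⟩, rfl⟩
  rw [pow_two, mul_smul, move p f q i, smul_comm, move p f _ j, hΦ]
  · simp
  · simp [Function.update_apply]

theorem exists_tensorPower_pairing (n : ℕ) :
    ∃ ε : ⨂[A]^n P ⊗[A] ⨂[A]^n P' ≃ₗ[A] A, ∀ (p : Fin n → P) (f : Fin n → P'),
      ε (PiTensorProduct.tprod A p ⊗ₜ PiTensorProduct.tprod A f) = ∏ i, e (p i ⊗ₜ f i) := by
  induction n with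
  | zero =>
    exact ⟨TensorProduct.congr (PiTensorProduct.isEmptyEquiv _)
      (PiTensorProduct.isEmptyEquiv _) ≪≫ₗ TensorProduct.lid A A, by simp⟩
  | succ n ih =>
    obtain ⟨ε, hε⟩ := ih
    refine ⟨TensorProduct.congr (tensorPowerSuccEquiv n P) (tensorPowerSuccEquiv n P') ≪≫ₗ
      TensorProduct.tensorTensorTensorComm A _ P _ P' ≪≫ₗ TensorProduct.congr ε e ≪≫ₗ
      TensorProduct.lid A A, fun p f => ?_⟩
    simp [tensorPowerSuccEquiv_tprod, hε, Fin.prod_univ_castSucc]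

end Invertible

section ExteriorPowerTensor

variable {A : Type*} [CommRing A] (n : ℕ) (M P : Type*) [AddCommGroup M] [Module A M]
  [AddCommGroup P] [Module A P]

noncomputable def exteriorPowerTensorMultilinear :
    MultilinearMap A (fun _ : Fin n => M) (⨂[A]^n P →ₗ[A] ⋀[A]^n (M ⊗[A] P)) :=
  (PiTensorProduct.lift.toLinearMap ∘ₗ
    LinearMap.applyₗ (exteriorPower.ιMulti A n).toMultilinearMap).compMultilinearMap
    (MultilinearMap.compLinearMapMultilinear.compLinearMap fun _ => TensorProduct.mk A M P)

theorem exteriorPowerTensorMultilinear_apply_tprod (m : Fin n → M) (q : Fin n → P) :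
    exteriorPowerTensorMultilinear n M P m (PiTensorProduct.tprod A q) =
      exteriorPower.ιMulti A n fun k => m k ⊗ₜ q k := by
  simp [exteriorPowerTensorMultilinear]

variable {M P} {P' : Type*} [AddCommGroup P'] [Module A P'] (e : P ⊗[A] P' ≃ₗ[A] A)

noncomputable def exteriorPowerTensorAlternating :
    M [⋀^Fin n]→ₗ[A] (⨂[A]^n P →ₗ[A] ⋀[A]^n (M ⊗[A] P)) where
  __ := exteriorPowerTensorMultilinear n M P
  map_eq_zero_of_eq' m i j hm hij := by
    classical
    refine PiTensorProduct.ext <| MultilinearMap.ext fun q => ?_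
    refine MultilinearMap.eq_zero_of_map_eq_zero_of_eq e (i := i) (j := j) _ (fun q hq => ?_) q
    change exteriorPowerTensorMultilinear n M P m (PiTensorProduct.tprod A q) = 0
    rw [exteriorPowerTensorMultilinear_apply_tprod]
    exact AlternatingMap.map_eq_zero_of_eq _ _ (by simp [hm, hq]) hij

variable (M) in
noncomputable def exteriorPowerTensorMap : ⋀[A]^n M ⊗[A] ⨂[A]^n P →ₗ[A] ⋀[A]^n (M ⊗[A] P) :=
  TensorProduct.lift <| exteriorPower.alternatingMapLinearEquiv
    (N := ⨂[A]^n P →ₗ[A] ⋀[A]^n (M ⊗[A] P)) (exteriorPowerTensorAlternating n e)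

theorem exteriorPowerTensorMap_tmul (m : Fin n → M) (q : Fin n → P) :
    exteriorPowerTensorMap n M e (exteriorPower.ιMulti A n m ⊗ₜ PiTensorProduct.tprod A q) =
      exteriorPower.ιMulti A n fun k => m k ⊗ₜ q k := by
  simp [exteriorPowerTensorMap, exteriorPowerTensorAlternating,
    exteriorPowerTensorMultilinear_apply_tprod]

theorem exteriorPowerTensorMap_surjective :
    Function.Surjective (exteriorPowerTensorMap n M e) := by
  rw [← LinearMap.range_eq_top, eq_top_iff,
    ← exteriorPower.ιMulti_span_of_span A n (M ⊗[A] P) (TensorProduct.span_tmul_eq_top A M P),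
    Submodule.span_le]
  rintro _ ⟨v, hv, rfl⟩
  choose m q hmq using fun k => hv ⟨k, rfl⟩
  exact ⟨exteriorPower.ιMulti A n m ⊗ₜ PiTensorProduct.tprod A q,
    by simp [exteriorPowerTensorMap_tmul, hmq]⟩

theorem exteriorPowerTensorMap_injective :
    Function.Injective (exteriorPowerTensorMap n M e) := by
  obtain ⟨ε, hε⟩ := exists_tensorPower_pairing e n
  have := Module.Invertible.right ε
  have left_inverse : (exteriorPower.map n (Module.Invertible.rightCancelEquiv M e).toLinearMap ∘ₗ
      exteriorPowerTensorMap n (M ⊗[A] P) (TensorProduct.comm A P' P ≪≫ₗ e)) ∘ₗ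
      (exteriorPowerTensorMap n M e).rTensor _ =
      (Module.Invertible.rightCancelEquiv (⋀[A]^n M) ε).toLinearMap := by
    -- instance search does not find this one under two layers of linear maps
    let _ : AddCommGroup (⨂[A]^n P' →ₗ[A] ⋀[A]^n M) := LinearMap.addCommGroup
    refine TensorProduct.ext (TensorProduct.ext (exteriorPower.linearMap_ext ?_))
    ext m q f
    simp [exteriorPowerTensorMap_tmul, hε, Function.comp_def, AlternatingMap.map_smul_univ]
  rw [← Module.Invertible.rTensor_injective_iff (M := ⨂[A]^n P')]
  have h := (Module.Invertible.rightCancelEquiv (⋀[A]^n M) ε).injective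
  rw [← LinearEquiv.coe_coe, ← left_inverse, LinearMap.coe_comp] at h
  exact h.of_comp

end ExteriorPowerTensor

/-- Let `A` be a commutative ring, `M` an `A`-module, `P` an invertible
`A`-module (i.e. admitting an inverse `P'` with `P ⊗[A] P' ≅ A`), and `n : ℕ`. Then
there is an isomorphism of `A`-modules `Λ^n(M ⊗ P) ≅ Λ^n(M) ⊗ P^⊗n`. -/
theorem statement14 {A : Type u} [CommRing A]
    (M : Type u) [AddCommGroup M] [Module A M]
    (P : Type u) [AddCommGroup P] [Module A P]
    (P' : Type u) [AddCommGroup P'] [Module A P'] (e : (P ⊗[A] P') ≃ₗ[A] A)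
    (n : ℕ) :
    Nonempty ((⋀[A]^n (M ⊗[A] P)) ≃ₗ[A] (⋀[A]^n M) ⊗[A] (⨂[A]^n P)) :=
  ⟨(LinearEquiv.ofBijective (exteriorPowerTensorMap n M e)
    ⟨exteriorPowerTensorMap_injective n e, exteriorPowerTensorMap_surjective n e⟩).symm⟩
end
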